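/- Let ℓ = 6, and let m ≥ 1 and p ≥ 0 be integers with 0 ≤ m − 2p ≤ 4, so that [m−p,p] ∈ Λ(m,6). Then the number of restricted tableaux |𝒯₆([m−p,p])| equals (3^⌊(m−1)/2⌋ + 1)/2 if m−2p ∈ {0,1}, equals (3^⌊(m−1)/2⌋ − 1)/2 if m−2p ∈ {3,4}, and equals 3^⌊(m−1)/2⌋ if m−2p = 2. -/

import Mathlib

/-! A shape occurring in a tableau of `𝒯₆` has two rows whose difference `d` lies in
`{0, …, 4}`, and adding a box changes `d` by `±1`. Tableaux are therefore walks from `0` on the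
path `0 – 1 – 2 – 3 – 4`, and their number satisfies the recurrence obtained by removing the last
box. The closed form satisfies the same recurrence, since `3 ^ ((m - 1) / 2)` is odd and its
exponent grows by one at every second step. -/

/-- `AddBox μ ν` means `ν` is obtained from `μ` by adding a single box (`μ → ν`). -/
def AddBox (μ ν : YoungDiagram) : Prop := μ ≤ ν ∧ ν.card = μ.card + 1

/-- `AdjBox μ ν` means `μ ↔ ν`, i.e. the diagrams differ by a single box. -/
def AdjBox (μ ν : YoungDiagram) : Prop := AddBox μ ν ∨ AddBox ν μ

/-- `RowsEq μ L` means the row lengths of `μ` are given by the list `L`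
(rows beyond the length of `L` being empty). -/
def RowsEq (μ : YoungDiagram) (L : List ℕ) : Prop := ∀ i, μ.rowLen i = L.getD i 0

/-- `Λ(j,ℓ)`: Young diagrams of size `j` with at most two rows whose
row difference is at most `ℓ - 2`. -/
def LambdaSet (j ℓ : ℕ) : Set YoungDiagram :=
  {μ | μ.card = j ∧ μ.rowLen 2 = 0 ∧ μ.rowLen 0 - μ.rowLen 1 ≤ ℓ - 2}

/-- `Γ(ℓ)` for a finite `ℓ ≥ 6`. -/
def GammaSet (ℓ : ℕ) : Set YoungDiagram :=
  {μ | μ.colLen 0 + μ.colLen 1 ≤ 4 ∧ μ.rowLen 0 + μ.rowLen 1 ≤ ℓ - 2}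
    ∪ {μ | RowsEq μ [ℓ - 2, 1, 1]}

/-- `Γ(∞)`: diagrams whose first two column lengths sum to at most `4`. -/
def GammaInf : Set YoungDiagram := {μ | μ.colLen 0 + μ.colLen 1 ≤ 4}

/-- A Young-tableau path of length `m`, with the `j`-th shape restricted to lie in `P j`. -/
def IsTabPath (P : ℕ → Set YoungDiagram) (m : ℕ) (f : Fin (m + 1) → YoungDiagram) : Prop :=
  f 0 = ⊥ ∧ (∀ j : Fin m, AddBox (f j.castSucc) (f j.succ)) ∧
    ∀ j : Fin (m + 1), f j ∈ P (j : ℕ)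

/-- An oscillating-tableau path of length `m` with all shapes in `Γ`. -/
def IsOscPath (Γ : Set YoungDiagram) (m : ℕ) (f : Fin (m + 1) → YoungDiagram) : Prop :=
  f 0 = ⊥ ∧ (∀ j : Fin m, AdjBox (f j.castSucc) (f j.succ)) ∧
    ∀ j : Fin (m + 1), f j ∈ Γ

/-- The number of Young tableaux (paths) of length `m`, with shapes restricted by `P`,
whose final shape has row lengths `L`. -/
noncomputable def tabCount (P : ℕ → Set YoungDiagram) (m : ℕ) (L : List ℕ) : ℕ :=
  Nat.card {f : Fin (m + 1) → YoungDiagram //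
    IsTabPath P m f ∧ RowsEq (f (Fin.last m)) L}

/-- The number of oscillating tableaux of length `m` with shapes in `Γ`
whose final shape has row lengths `L`. -/
noncomputable def oscCount (Γ : Set YoungDiagram) (m : ℕ) (L : List ℕ) : ℕ :=
  Nat.card {f : Fin (m + 1) → YoungDiagram //
    IsOscPath Γ m f ∧ RowsEq (f (Fin.last m)) L}

/-- The number of oscillating tableaux of length `m` with shapes in `Γ` and final shape `ν`. -/
noncomputable def oscCountD (Γ : Set YoungDiagram) (m : ℕ) (ν : YoungDiagram) : ℕ :=
  Nat.card {f : Fin (m + 1) → YoungDiagram //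
    IsOscPath Γ m f ∧ f (Fin.last m) = ν}

open Finset

namespace YoungDiagram

theorem rowLen_le_rowLen {μ ν : YoungDiagram} (h : μ ≤ ν) (i : ℕ) : μ.rowLen i ≤ ν.rowLen i := by
  by_contra! hlt
  exact lt_irrefl _ (mem_iff_lt_rowLen.mp (h (mem_iff_lt_rowLen.mpr hlt)))

-- Rows `a` and `min a b`: the `min` makes this a Young diagram for all `a b`.
def twoRow (a b : ℕ) : YoungDiagram where
  cells := {0} ×ˢ range a ∪ {1} ×ˢ range (min a b)
  isLowerSet := by
    rintro ⟨i, j⟩ ⟨i', j'⟩ ⟨hi, hj⟩ h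
    simp only [coe_union, coe_product, coe_singleton, coe_range, Set.mem_union, Set.mem_prod,
      Set.mem_singleton_iff, Set.mem_Iio] at h ⊢
    omega

theorem mem_twoRow {a b i j : ℕ} :
    (i, j) ∈ twoRow a b ↔ i = 0 ∧ j < a ∨ i = 1 ∧ j < min a b := by
  rw [← mem_cells]
  simp [twoRow]
  omega

theorem rowLen_twoRow_zero (a b : ℕ) : (twoRow a b).rowLen 0 = a := by
  refine le_antisymm ?_ ?_ <;> by_contra! h
  · have := mem_twoRow.mp (mem_iff_lt_rowLen.mpr h); omega
  · have := mem_iff_lt_rowLen.mp ((mem_twoRow (b := b)).mpr (.inl ⟨rfl, h⟩)); omega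

theorem rowLen_twoRow_one (a b : ℕ) : (twoRow a b).rowLen 1 = min a b := by
  refine le_antisymm ?_ ?_ <;> by_contra! h
  · have := mem_twoRow.mp (mem_iff_lt_rowLen.mpr h); omega
  · have := mem_iff_lt_rowLen.mp ((mem_twoRow (a := a)).mpr (.inr ⟨rfl, h⟩)); omega

theorem rowLen_twoRow_of_two_le (a b : ℕ) {i : ℕ} (hi : 2 ≤ i) : (twoRow a b).rowLen i = 0 := by
  by_contra! h
  have := mem_twoRow.mp (mem_iff_lt_rowLen.mpr (Nat.pos_of_ne_zero h)); omega

theorem twoRow_zero (b : ℕ) : twoRow 0 b = ⊥ :=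
  SetLike.ext fun ⟨i, j⟩ => by simp [mem_twoRow, notMem_bot]

theorem card_twoRow (a b : ℕ) : (twoRow a b).card = a + min a b := by
  change (_ ∪ _ : Finset _).card = _
  rw [card_union_of_disjoint (by simp [disjoint_left])]
  simp

theorem eq_twoRow_of_rowLen_two {μ : YoungDiagram} (h : μ.rowLen 2 = 0) :
    μ = twoRow (μ.rowLen 0) (μ.rowLen 1) := by
  have h10 := μ.rowLen_anti 0 1 zero_le_one
  refine SetLike.ext fun ⟨i, j⟩ => ?_
  rw [mem_iff_lt_rowLen, mem_twoRow, min_eq_right h10]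
  match i with
  | 0 | 1 => omega
  | n + 2 => have := μ.rowLen_anti 2 (n + 2) (by omega); omega

theorem twoRow_le_twoRow {a b a' b' : ℕ} (ha : a ≤ a') (hb : b ≤ b') :
    twoRow a b ≤ twoRow a' b' := by
  rintro ⟨i, j⟩ h
  rw [mem_twoRow] at h ⊢
  omega

theorem rowsEq_pair_iff {μ : YoungDiagram} {a b : ℕ} (hb : b ≤ a) :
    RowsEq μ [a, b] ↔ μ = twoRow a b := by
  constructor
  · intro h
    have h0 : μ.rowLen 0 = a := h 0
    have h1 : μ.rowLen 1 = b := h 1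
    rw [eq_twoRow_of_rowLen_two (h 2), h0, h1]
  · rintro rfl (_ | _ | i)
    · exact rowLen_twoRow_zero a b
    · exact (rowLen_twoRow_one a b).trans (min_eq_right hb)
    · exact rowLen_twoRow_of_two_le a b (by omega)

theorem twoRow_mem_lambdaSet_iff {a b j ℓ : ℕ} (hb : b ≤ a) :
    twoRow a b ∈ LambdaSet j ℓ ↔ a + b = j ∧ a - b ≤ ℓ - 2 := by
  simp only [LambdaSet, Set.mem_ofPred_eq, card_twoRow, rowLen_twoRow_zero, rowLen_twoRow_one,
    rowLen_twoRow_of_two_le a b le_rfl, min_eq_right hb, true_and]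

theorem addBox_twoRow_iff {μ : YoungDiagram} {a b : ℕ} (hb : b ≤ a) :
    AddBox μ (twoRow a b) ↔ b < a ∧ μ = twoRow (a - 1) b ∨ 0 < b ∧ μ = twoRow a (b - 1) := by
  constructor
  · rintro ⟨hle, hcard⟩
    have hμ := eq_twoRow_of_rowLen_two (Nat.le_zero.mp
      ((rowLen_le_rowLen hle 2).trans (rowLen_twoRow_of_two_le a b le_rfl).le))
    have h0 := (rowLen_le_rowLen hle 0).trans (rowLen_twoRow_zero a b).le
    have h1 := (rowLen_le_rowLen hle 1).trans (rowLen_twoRow_one a b).le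
    have h10 := μ.rowLen_anti 0 1 zero_le_one
    rw [hμ, card_twoRow, card_twoRow, min_eq_right h10, min_eq_right hb] at hcard
    rw [hμ]
    rcases lt_or_eq_of_le h1 with h1 | h1
    · refine .inr ⟨by omega, ?_⟩
      congr 1 <;> omega
    · refine .inl ⟨by omega, ?_⟩
      congr 1 <;> omega
  · rintro (⟨hlt, rfl⟩ | ⟨hpos, rfl⟩)
    · refine ⟨twoRow_le_twoRow (Nat.sub_le a 1) le_rfl, ?_⟩
      rw [card_twoRow, card_twoRow]; omega
    · refine ⟨twoRow_le_twoRow le_rfl (Nat.sub_le b 1), ?_⟩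
      rw [card_twoRow, card_twoRow]; omega

theorem finite_Iic (ν : YoungDiagram) : (Set.Iic ν).Finite :=
  (ν.cells.powerset.finite_toSet.preimage fun _ _ _ _ h => YoungDiagram.ext h).subset
    fun _ hμ => mem_powerset.mpr (cells_subset_iff.mpr hμ)

end YoungDiagram

open YoungDiagram

section Paths

variable {P : ℕ → Set YoungDiagram} {m : ℕ}

noncomputable def pathCount (P : ℕ → Set YoungDiagram) (m : ℕ) (ν : YoungDiagram) : ℕ :=
  Nat.card {f : Fin (m + 1) → YoungDiagram // IsTabPath P m f ∧ f (Fin.last m) = ν}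

theorem IsTabPath.monotone {f : Fin (m + 1) → YoungDiagram} (hf : IsTabPath P m f) :
    Monotone f :=
  Fin.monotone_iff_le_succ.mpr fun j => (hf.2.1 j).1

instance finite_tabPaths (P : ℕ → Set YoungDiagram) (m : ℕ) (ν : YoungDiagram) :
    Finite {f : Fin (m + 1) → YoungDiagram // IsTabPath P m f ∧ f (Fin.last m) = ν} := by
  have := ν.finite_Iic.to_subtype
  refine Finite.of_injective (fun f j => (⟨f.1 j, ?_⟩ : Set.Iic ν)) fun f g hfg => ?_
  · exact (f.2.1.monotone (Fin.le_last j)).trans_eq f.2.2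
  · exact Subtype.ext (funext fun j => congrArg Subtype.val (congrFun hfg j))

theorem pathCount_zero (h : ⊥ ∈ P 0) : pathCount P 0 ⊥ = 1 := by
  refine Nat.card_eq_one_iff_exists.mpr ⟨⟨fun _ => ⊥, ⟨rfl, finZeroElim, fun j => ?_⟩, rfl⟩, ?_⟩
  · rwa [Fin.fin_one_eq_zero j]
  · rintro ⟨f, ⟨hf, -⟩, -⟩
    exact Subtype.ext (funext fun j => (Fin.fin_one_eq_zero j).symm ▸ hf)

theorem pathCount_eq_zero_of_notMem {ν : YoungDiagram} (h : ν ∉ P m) : pathCount P m ν = 0 := by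
  have : IsEmpty {f : Fin (m + 1) → YoungDiagram // IsTabPath P m f ∧ f (Fin.last m) = ν} :=
    ⟨fun ⟨f, hf, hν⟩ => h (by simpa [hν] using hf.2.2 (Fin.last m))⟩
  exact Nat.card_of_isEmpty

def tabPathSnocEquiv {ν : YoungDiagram} (hν : ν ∈ P (m + 1)) :
    {f : Fin (m + 2) → YoungDiagram // IsTabPath P (m + 1) f ∧ f (Fin.last (m + 1)) = ν} ≃
      {g : Fin (m + 1) → YoungDiagram // IsTabPath P m g ∧ AddBox (g (Fin.last m)) ν} where
  toFun f := by
    refine ⟨Fin.init f.1, ⟨f.2.1.1, fun j => ?_, fun j => f.2.1.2.2 j.castSucc⟩, ?_⟩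
    · simpa only [Fin.init, Fin.succ_castSucc] using f.2.1.2.1 j.castSucc
    · simpa only [Fin.init, Fin.succ_last, f.2.2] using f.2.1.2.1 (Fin.last m)
  invFun g := by
    refine ⟨Fin.snoc g.1 ν, ⟨?_, fun j => ?_, fun j => ?_⟩, Fin.snoc_last _ _⟩
    · exact (Fin.snoc_castSucc (α := fun _ => YoungDiagram) ν g.1 0).trans g.2.1.1
    · induction j using Fin.lastCases with
      | last => simpa only [Fin.succ_last, Fin.snoc_castSucc, Fin.snoc_last] using g.2.2
      | cast i => simpa only [Fin.succ_castSucc, Fin.snoc_castSucc] using g.2.1.2.1 i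
    · induction j using Fin.lastCases with
      | last => simpa only [Fin.snoc_last, Fin.val_last] using hν
      | cast i => simpa only [Fin.snoc_castSucc, Fin.val_castSucc] using g.2.1.2.2 i
  left_inv f := Subtype.ext (by simp only [← f.2.2, Fin.snoc_init_self])
  right_inv g := Subtype.ext (Fin.init_snoc (α := fun _ => YoungDiagram) ν g.1)

theorem pathCount_succ {ν : YoungDiagram} (hν : ν ∈ P (m + 1)) (S : Finset YoungDiagram)
    (hS : ∀ μ, AddBox μ ν ↔ μ ∈ S) : pathCount P (m + 1) ν = ∑ μ ∈ S, pathCount P m μ := by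
  let lastShape : {g // IsTabPath P m g} → YoungDiagram := fun g => g.1 (Fin.last m)
  let fibreEquiv (μ : YoungDiagram) := Equiv.subtypeSubtypeEquivSubtypeInter
    (IsTabPath P m) (fun g : Fin (m + 1) → YoungDiagram => g (Fin.last m) = μ)
  have (μ : S) : Finite {g // lastShape g = μ} := .of_equiv _ (fibreEquiv μ).symm
  calc pathCount P (m + 1) ν
      = Nat.card {g : {g // IsTabPath P m g} // lastShape g ∈ S} :=
        Nat.card_congr <| (tabPathSnocEquiv hν).trans <|
          (Equiv.subtypeEquivRight fun g => and_congr_right fun _ => hS _).trans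
            (Equiv.subtypeSubtypeEquivSubtypeInter _ _).symm
    _ = ∑ μ : S, Nat.card {g // lastShape g = μ} := by
        rw [← Nat.card_congr (Equiv.sigmaSubtypeFiberEquivSubtype lastShape fun _ => Iff.rfl),
          Nat.card_sigma]
    _ = ∑ μ ∈ S, pathCount P m μ := by
        rw [← Finset.sum_coe_sort S]
        exact Finset.sum_congr rfl fun μ _ => Nat.card_congr (fibreEquiv μ)

theorem tabCount_pair_eq_pathCount {a b : ℕ} (hb : b ≤ a) :
    tabCount P m [a, b] = pathCount P m (twoRow a b) :=
  Nat.card_congr (Equiv.subtypeEquivRight fun _ => and_congr_right fun _ => rowsEq_pair_iff hb)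

theorem pathCount_twoRow_succ {a b : ℕ} (hb : b ≤ a) (hν : twoRow a b ∈ P (m + 1)) :
    pathCount P (m + 1) (twoRow a b) =
      (if b < a then pathCount P m (twoRow (a - 1) b) else 0) +
        (if 0 < b then pathCount P m (twoRow a (b - 1)) else 0) := by
  classical
  have hne (h : b < a) : twoRow (a - 1) b ≠ twoRow a (b - 1) := fun heq => by
    have := congrArg (rowLen · 0) heq
    simp only [rowLen_twoRow_zero] at this
    omega
  rw [pathCount_succ hν ((if b < a then {twoRow (a - 1) b} else ∅) ∪
    (if 0 < b then {twoRow a (b - 1)} else ∅)), Finset.sum_union]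
  · split_ifs <;> simp
  · split_ifs with h <;> simp [*]
  · intro μ
    rw [addBox_twoRow_iff hb]
    split_ifs <;> simp [*]

end Paths

def closedForm (m d : ℕ) : ℕ :=
  if d ≤ 1 then (3 ^ ((m - 1) / 2) + 1) / 2
  else if d = 2 then 3 ^ ((m - 1) / 2)
  else (3 ^ ((m - 1) / 2) - 1) / 2

theorem closedForm_succ {m a b : ℕ} (hb : b ≤ a) (hab : a + b = m + 1) (hd : a - b ≤ 4) :
    closedForm (m + 1) (a - b) =
      (if b < a then closedForm m (a - 1 - b) else 0) +
        (if 0 < b ∧ a - b < 4 then closedForm m (a - (b - 1)) else 0) := by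
  obtain ⟨d, rfl⟩ := Nat.exists_eq_add_of_le hb
  replace hd : d ≤ 4 := by omega
  rcases Nat.eq_zero_or_pos b with rfl | hb0
  · obtain rfl : m = d - 1 := by omega
    interval_cases d <;> first | omega | rfl
  have hodd : 3 ^ ((m - 1) / 2) % 2 = 1 := by rw [Nat.pow_mod]; norm_num
  have hpos : 0 < 3 ^ ((m - 1) / 2) := by positivity
  have hsub : b + d - 1 - b = d - 1 := by omega
  have hsub' : b + d - (b - 1) = d + 1 := by omega
  rw [show b + d - b = d by omega, hsub, hsub']
  unfold closedForm
  interval_cases d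
  -- from `m` to `m + 1` the exponent `(m - 1) / 2` grows by one exactly when `m` is even
  all_goals first
    | rw [show (m + 1 - 1) / 2 = (m - 1) / 2 by omega]
    | rw [show (m + 1 - 1) / 2 = (m - 1) / 2 + 1 by omega, pow_succ]
  all_goals simp [hb0] <;> omega

theorem pathCount_lambdaSix_twoRow {m a b : ℕ} (hb : b ≤ a) (hab : a + b = m) (hd : a - b ≤ 4) :
    pathCount (fun j => LambdaSet j 6) m (twoRow a b) = closedForm m (a - b) := by
  induction m generalizing a b with
  | zero =>
    obtain ⟨rfl, rfl⟩ : a = 0 ∧ b = 0 := by omega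
    rw [twoRow_zero, pathCount_zero]
    · rfl
    · exact twoRow_zero 0 ▸ (twoRow_mem_lambdaSet_iff le_rfl).mpr ⟨rfl, by norm_num⟩
  | succ m ih =>
    have hν := (twoRow_mem_lambdaSet_iff (ℓ := 6) hb).mpr ⟨hab, hd⟩
    rw [pathCount_twoRow_succ (P := fun j => LambdaSet j 6) hb hν, closedForm_succ hb hab hd]
    congr 1
    · split_ifs
      · exact ih (by omega) (by omega) (by omega)
      · rfl
    · by_cases hb0 : 0 < b
      · by_cases hd4 : a - b < 4
        · rw [if_pos hb0, if_pos ⟨hb0, hd4⟩]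
          exact ih (by omega) (by omega) (by omega)
        · rw [if_pos hb0, if_neg (by omega), pathCount_eq_zero_of_notMem]
          rw [twoRow_mem_lambdaSet_iff (by omega)]
          omega
      · rw [if_neg hb0, if_neg (by omega)]

theorem tab_count_level_six_general (m p : ℕ) (hp : 2 * p ≤ m)
    (hd : m - 2 * p ≤ 4) :
    (m - 2 * p = 0 ∨ m - 2 * p = 1 →
      tabCount (fun j => LambdaSet j 6) m [m - p, p] = (3 ^ ((m - 1) / 2) + 1) / 2) ∧
    (m - 2 * p = 3 ∨ m - 2 * p = 4 →
      tabCount (fun j => LambdaSet j 6) m [m - p, p] = (3 ^ ((m - 1) / 2) - 1) / 2) ∧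
    (m - 2 * p = 2 →
      tabCount (fun j => LambdaSet j 6) m [m - p, p] = 3 ^ ((m - 1) / 2)) := by
  have hpm : p ≤ m - p := by omega
  rw [tabCount_pair_eq_pathCount hpm,
    pathCount_lambdaSix_twoRow hpm (by omega) (by omega), show m - p - p = m - 2 * p by omega]
  refine ⟨fun h => if_pos (by omega), fun h => ?_, fun h => ?_⟩
  · rw [closedForm, if_neg (by omega), if_neg (by omega)]
  · rw [closedForm, if_neg (by omega), if_pos h]

/-- Lemma 2.2(b) (Jones): the counts of restricted tableaux `|𝒯₆([m-p,p])|` for `ℓ = 6`. -/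
theorem tab_count_level_six (m p : ℕ) (hm : 1 ≤ m) (hp : 2 * p ≤ m)
    (hd : m - 2 * p ≤ 4) :
    (m - 2 * p = 0 ∨ m - 2 * p = 1 →
      tabCount (fun j => LambdaSet j 6) m [m - p, p] = (3 ^ ((m - 1) / 2) + 1) / 2) ∧
    (m - 2 * p = 3 ∨ m - 2 * p = 4 →
      tabCount (fun j => LambdaSet j 6) m [m - p, p] = (3 ^ ((m - 1) / 2) - 1) / 2) ∧
    (m - 2 * p = 2 →
      tabCount (fun j => LambdaSet j 6) m [m - p, p] = 3 ^ ((m - 1) / 2)) :=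
  tab_count_level_six_general m p hp hd
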